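/- arXiv:2107.01536 — 2 statements merged into one kernel-verified Lean document; each statement's English description precedes it below -/
import Mathlib

section
/- Let X be a compact metric space with a dense sequence (α_n). If U is a finite union of open balls with rational radii centered at points α_i, then U is clopen and U ≠ X if and only if there exists a finite union V of such balls with U ∪ V = X and such that no point α_k satisfies simultaneously d(α_k, c) < r for some ball B(c,r) in U's decomposition and d(α_k, c') < r' for some ball B(c',r') in V's decomposition. -/
/-!
If `U` is clopen and proper, its complement is a nonempty compact open set, so finitely many
rational balls centred on the dense sequence and contained in `Uᶜ` cover it; these balls form
`V`, and no point at all lies in both `U` and `V`. Conversely, if no point of the dense sequence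
lies in the open set `U ∩ V`, then `U ∩ V` is empty, so `U` and `V` are complementary open sets;
thus `U` is clopen, and proper because `V` contains the centre of its first ball.
-/

open Metric Set

theorem DenseRange.disjoint_of_disjoint_preimage {X ι : Type*} [TopologicalSpace X] {α : ι → X}
    (hα : DenseRange α) {U V : Set X} (hU : IsOpen U) (hV : IsOpen V) (h : Disjoint (α ⁻¹' U) (α ⁻¹' V)) :
    Disjoint U V := by
  rw [disjoint_iff_inter_eq_empty, ← not_nonempty_iff_eq_empty]
  intro hUV
  obtain ⟨k, hk⟩ := hα.exists_mem_open (hU.inter hV) hUV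
  exact disjoint_left.1 h hk.1 hk.2

section DenseBalls

variable {X ι : Type*} [MetricSpace X] {α : ι → X}

theorem DenseRange.exists_rat_ball_mem_subset (hα : DenseRange α) {W : Set X} (hW : IsOpen W)
    {x : X} (hx : x ∈ W) : ∃ (k : ι) (r : ℚ), 0 < r ∧ x ∈ ball (α k) r ∧ ball (α k) r ⊆ W := by
  obtain ⟨ε, hε, hxε⟩ := Metric.isOpen_iff.1 hW x hx
  obtain ⟨k, hk⟩ := Metric.denseRange_iff.1 hα x (ε / 3) (by positivity)
  obtain ⟨r, hεr, hrε⟩ := exists_rat_btwn (show ε / 3 < ε / 2 by linarith)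
  refine ⟨k, r, ?_, ?_, (ball_subset_ball' ?_).trans hxε⟩
  · exact_mod_cast (show (0 : ℝ) < ε / 3 by positivity).trans hεr
  · exact mem_ball.2 (hk.trans hεr)
  · rw [dist_comm]
    linarith

theorem DenseRange.exists_fin_rat_ball_cover (hα : DenseRange α) {K W : Set X}
    (hK : IsCompact K) (hW : IsOpen W) (hKW : K ⊆ W) :
    ∃ (m : ℕ) (e : Fin m → ι) (s : Fin m → ℚ), (∀ j, 0 < s j) ∧
      K ⊆ ⋃ j, ball (α (e j)) (s j) ∧ ⋃ j, ball (α (e j)) (s j) ⊆ W := by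
  let B := {p : ι × ℚ // 0 < p.2 ∧ ball (α p.1) p.2 ⊆ W}
  obtain ⟨t, ht⟩ := hK.elim_finite_subcover (fun p : B => ball (α p.1.1) p.1.2)
    (fun _ => isOpen_ball) fun x hx => by
      obtain ⟨k, r, hr, hxr, hrW⟩ := hα.exists_rat_ball_mem_subset hW (hKW hx)
      exact mem_iUnion.2 ⟨⟨(k, r), hr, hrW⟩, hxr⟩
  let p : Fin t.card → B := fun j => t.equivFin.symm j
  have hunion : ⋃ j, ball (α (p j).1.1) (p j).1.2 = ⋃ b ∈ t, ball (α b.1.1) b.1.2 := by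
    rw [t.equivFin.symm.surjective.iUnion_comp (fun b : t => ball (α b.1.1.1) b.1.1.2),
      iUnion_subtype]
  refine ⟨t.card, fun j => (p j).1.1, fun j => (p j).1.2, fun j => (p j).2.1, ?_, ?_⟩
  · exact hunion ▸ ht
  · exact iUnion_subset fun j => (p j).2.2

end DenseBalls

theorem stmt_12_general {X : Type*} [MetricSpace X] [CompactSpace X]
    (α : ℕ → X) (hdense : DenseRange α)
    (n : ℕ) (c : Fin n → ℕ) (q : Fin n → ℚ) :
    (IsClopen (⋃ i, Metric.ball (α (c i)) (q i)) ∧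
        (⋃ i, Metric.ball (α (c i)) (q i)) ≠ Set.univ) ↔
      ∃ (m : ℕ) (_ : 0 < m) (e : Fin m → ℕ) (s : Fin m → ℚ),
        (∀ j, 0 < s j) ∧
        (⋃ i, Metric.ball (α (c i)) (q i)) ∪
            (⋃ j, Metric.ball (α (e j)) (s j)) = Set.univ ∧
        ¬∃ (k : ℕ) (i : Fin n) (j : Fin m),
          dist (α k) (α (c i)) < (q i : ℝ) ∧
          dist (α k) (α (e j)) < (s j : ℝ) := by
  set U := ⋃ i, ball (α (c i)) (q i)
  have hU : IsOpen U := isOpen_iUnion fun _ => isOpen_ball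
  constructor
  · rintro ⟨hclopen, hne⟩
    obtain ⟨m, e, s, hs, hcover, hsub⟩ := hdense.exists_fin_rat_ball_cover
      hU.isClosed_compl.isCompact hclopen.isClosed.isOpen_compl subset_rfl
    have hm : 0 < m := by
      obtain ⟨x, hx⟩ := nonempty_compl.2 hne
      obtain ⟨j, -⟩ := mem_iUnion.1 (hcover hx)
      exact j.pos
    refine ⟨m, hm, e, s, hs, eq_univ_of_forall fun x => (em (x ∈ U)).imp id (hcover ·), ?_⟩
    rintro ⟨k, i, j, hki, hkj⟩
    exact hsub (mem_iUnion.2 ⟨j, hkj⟩) (mem_iUnion.2 ⟨i, hki⟩)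
  · rintro ⟨m, hm, e, s, hs, hcov, hdisj⟩
    have hV : IsOpen (⋃ j, ball (α (e j)) (s j)) := isOpen_iUnion fun _ => isOpen_ball
    have hUV : Disjoint U (⋃ j, ball (α (e j)) (s j)) :=
      hdense.disjoint_of_disjoint_preimage hU hV <| disjoint_left.2 fun k hkU hkV => by
        obtain ⟨i, hi⟩ := mem_iUnion.1 hkU
        obtain ⟨j, hj⟩ := mem_iUnion.1 hkV
        exact hdisj ⟨k, i, j, hi, hj⟩
    refine ⟨isClopen_of_disjoint_cover_open hcov.ge hU hV hUV, fun hUuniv => ?_⟩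
    have hcentre : α (e ⟨0, hm⟩) ∈ ⋃ j, ball (α (e j)) (s j) :=
      mem_iUnion.2 ⟨⟨0, hm⟩, mem_ball_self (by exact_mod_cast hs _)⟩
    exact hUV.notMem_of_mem_right hcentre (hUuniv ▸ mem_univ _)

/-- effective characterization of proper clopen sets via the dense
sequence. -/
theorem stmt_12 {X : Type*} [MetricSpace X] [CompactSpace X]
    (α : ℕ → X) (hdense : DenseRange α)
    (n : ℕ) (hn : 0 < n) (c : Fin n → ℕ) (q : Fin n → ℚ) (hq : ∀ i, 0 < q i) :
    (IsClopen (⋃ i, Metric.ball (α (c i)) (q i)) ∧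
        (⋃ i, Metric.ball (α (c i)) (q i)) ≠ Set.univ) ↔
      ∃ (m : ℕ) (_ : 0 < m) (e : Fin m → ℕ) (s : Fin m → ℚ),
        (∀ j, 0 < s j) ∧
        (⋃ i, Metric.ball (α (c i)) (q i)) ∪
            (⋃ j, Metric.ball (α (e j)) (s j)) = Set.univ ∧
        ¬∃ (k : ℕ) (i : Fin n) (j : Fin m),
          dist (α k) (α (c i)) < (q i : ℝ) ∧
          dist (α k) (α (e j)) < (s j : ℝ) :=
  stmt_12_general α hdense n c q
end

section
/- Let h_1, ..., h_n be continuous real-valued functions on a space X such that for every subset Λ ⊆ {1,...,n}, the function Σ_{i∈Λ} h_i is an indicator function (values in [-1/32, 1+1/32], always < 1/4 or > 3/4), and such that for every partition Λ ⊔ Γ = {1,...,n}, the sets X_{Σ_Λ} and X_{Σ_Γ} are disjoint with union X. Then the sets X_{h_1}, ..., X_{h_n} are pairwise disjoint and their union is X, and for every Λ, X_{Σ_{i∈Λ} h_i} = ⋃_{i∈Λ} X_{h_i}. -/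
/-!
Pointwise, the hypothesis says that every partial sum of `h₁(x), …, hₙ(x)` lies in
`[-1/32, 1 + 1/32]` and avoids `[1/4, 3/4]`. For disjoint `Λ, Γ` the sum over `Λ ∪ Γ` then
exceeds `1/2` iff one of the two pieces does (two pieces below `1/4` stay below `1/2`, a piece
above `3/4` cannot be pulled below `1/2` by one that is at least `-1/32`), and the two pieces
cannot both exceed `3/4` since their sum is at most `1 + 1/32`. Induction on `Λ` gives
`X_{Σ_Λ} = ⋃_{i ∈ Λ} X_{h_i}`; the partition `∅ ⊔ univ` then shows that the `X_{h_i}` cover `X`.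
-/

open Finset

def IsIndicatorValue (t : ℝ) : Prop :=
  -(1/32) ≤ t ∧ t ≤ 1 + 1/32 ∧ (t < 1/4 ∨ 3/4 < t)

namespace IsIndicatorValue

variable {s t : ℝ}

theorem half_lt_add_iff (hs : IsIndicatorValue s) (ht : IsIndicatorValue t) :
    1/2 < s + t ↔ 1/2 < s ∨ 1/2 < t := by
  obtain ⟨hs₀, -, hs | hs⟩ := hs <;> obtain ⟨ht₀, -, ht | ht⟩ := ht
  · exact iff_of_false (by linarith) (by rintro (_ | _) <;> linarith)
  all_goals exact iff_of_true (by linarith) (by first | (left; linarith) | (right; linarith))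

theorem not_half_lt_and (hs : IsIndicatorValue s) (ht : IsIndicatorValue t)
    (hst : IsIndicatorValue (s + t)) : ¬(1/2 < s ∧ 1/2 < t) := by
  rintro ⟨hs', ht'⟩
  obtain ⟨-, -, hs | hs⟩ := hs <;> obtain ⟨-, -, ht | ht⟩ := ht <;> linarith [hst.2.1]

end IsIndicatorValue

section

variable {ι : Type*} [DecidableEq ι] {a : ι → ℝ}

theorem half_lt_sum_iff_exists (ha : ∀ Λ : Finset ι, IsIndicatorValue (∑ i ∈ Λ, a i))
    (Λ : Finset ι) : 1/2 < ∑ i ∈ Λ, a i ↔ ∃ i ∈ Λ, 1/2 < a i := by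
  induction Λ using Finset.induction_on with
  | empty => norm_num
  | insert j Λ hj ih =>
    have hsingle : IsIndicatorValue (a j) := by simpa using ha {j}
    rw [sum_insert hj, hsingle.half_lt_add_iff (ha Λ), ih, exists_mem_insert]

theorem not_half_lt_and_of_ne (ha : ∀ Λ : Finset ι, IsIndicatorValue (∑ i ∈ Λ, a i))
    {i j : ι} (hij : i ≠ j) : ¬(1/2 < a i ∧ 1/2 < a j) := by
  have hpair := ha {i, j}
  rw [sum_pair hij] at hpair
  exact (by simpa using ha {i} : IsIndicatorValue (a i)).not_half_lt_and
    (by simpa using ha {j}) hpair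

end

open Finset in
theorem stmt_17_general {X : Type*} (n : ℕ) (h : Fin n → X → ℝ)
    (hind : ∀ Λ : Finset (Fin n),
      (∀ x, -(1/32) ≤ ∑ i ∈ Λ, h i x ∧ (∑ i ∈ Λ, h i x) ≤ 1 + 1/32) ∧
      (∀ x, (∑ i ∈ Λ, h i x) < 1/4 ∨ (∑ i ∈ Λ, h i x) > 3/4))
    (hpart : ∀ Λ : Finset (Fin n),
      {x | (∑ i ∈ Λ, h i x) > 1/2} ∩ {x | (∑ i ∈ Λᶜ, h i x) > 1/2} = ∅ ∧
      {x | (∑ i ∈ Λ, h i x) > 1/2} ∪ {x | (∑ i ∈ Λᶜ, h i x) > 1/2} =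
        Set.univ) :
    (∀ i j : Fin n, i ≠ j →
      {x | h i x > 1/2} ∩ {x | h j x > 1/2} = ∅) ∧
    (⋃ i, {x | h i x > 1/2}) = Set.univ ∧
    (∀ Λ : Finset (Fin n),
      {x | (∑ i ∈ Λ, h i x) > 1/2} = ⋃ i ∈ Λ, {x | h i x > 1/2}) := by
  have hval (x : X) (Λ : Finset (Fin n)) : IsIndicatorValue (∑ i ∈ Λ, h i x) :=
    ⟨((hind Λ).1 x).1, ((hind Λ).1 x).2, (hind Λ).2 x⟩
  have hsum (Λ : Finset (Fin n)) :
      {x | (∑ i ∈ Λ, h i x) > 1/2} = ⋃ i ∈ Λ, {x | h i x > 1/2} := by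
    ext x
    simpa using half_lt_sum_iff_exists (hval x) Λ
  refine ⟨fun i j hij ↦ ?_, ?_, hsum⟩
  · ext x
    simpa using not_half_lt_and_of_ne (hval x) hij
  · have hcover := (hpart ∅).2
    rw [compl_empty, hsum univ] at hcover
    norm_num at hcover
    exact hcover

open Finset in
/-- partitions of unity by indicator functions induce partitions of
the space. -/
theorem stmt_17 {X : Type*} [TopologicalSpace X] (n : ℕ) (h : Fin n → X → ℝ)
    (hc : ∀ i, Continuous (h i))
    (hind : ∀ Λ : Finset (Fin n),
      (∀ x, -(1/32) ≤ ∑ i ∈ Λ, h i x ∧ (∑ i ∈ Λ, h i x) ≤ 1 + 1/32) ∧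
      (∀ x, (∑ i ∈ Λ, h i x) < 1/4 ∨ (∑ i ∈ Λ, h i x) > 3/4))
    (hpart : ∀ Λ : Finset (Fin n),
      {x | (∑ i ∈ Λ, h i x) > 1/2} ∩ {x | (∑ i ∈ Λᶜ, h i x) > 1/2} = ∅ ∧
      {x | (∑ i ∈ Λ, h i x) > 1/2} ∪ {x | (∑ i ∈ Λᶜ, h i x) > 1/2} =
        Set.univ) :
    (∀ i j : Fin n, i ≠ j →
      {x | h i x > 1/2} ∩ {x | h j x > 1/2} = ∅) ∧
    (⋃ i, {x | h i x > 1/2}) = Set.univ ∧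
    (∀ Λ : Finset (Fin n),
      {x | (∑ i ∈ Λ, h i x) > 1/2} = ⋃ i ∈ Λ, {x | h i x > 1/2}) :=
  stmt_17_general n h hind hpart
end
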